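/- With F the Koszul complex on x,y as above over a ring where (x,y) is a regular sequence (e.g. R = ℚ[x,y]), the complex Λ²F (R² ← R⁴ ← R² with the matrices D₂, D₃) is exact at the middle term, i.e., ker D₂ = im D₃, when 2 is invertible in R. -/

import Mathlib

open MvPolynomial

noncomputable abbrev R4 : Type := MvPolynomial (Fin 2) ℚ

/-!
If `x, y` is a regular sequence, a vector `v` in the kernel of `D₂` satisfies `x ∣ y v₀` and
`x ∣ y (v₁ - v₃)`, hence `v₀ = x a` and `v₁ - v₃ = x c`; cancelling `x` then gives
`v₁ + v₃ = -y a` and `v₂ = -y c`, so `v = D₃ (a/2, c/2)`.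
-/

namespace ExteriorSquareKoszul

variable {R : Type*} [CommRing R] (x y : R)

def d₂ : Matrix (Fin 2) (Fin 4) R := !![y, x, 0, x; 0, y, x, -y]

def d₃ : Matrix (Fin 4) (Fin 2) R := !![2 * x, 0; -y, x; 0, -2 * y; -y, -x]

theorem d₂_mul_d₃ : d₂ x y * d₃ x y = 0 := by
  ext i j
  fin_cases i <;> fin_cases j <;> simp [d₂, d₃, Matrix.mul_apply, Fin.sum_univ_four] <;> ring

theorem range_d₃_le_ker_d₂ :
    LinearMap.range (d₃ x y).mulVecLin ≤ LinearMap.ker (d₂ x y).mulVecLin := by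
  rw [LinearMap.range_le_ker_iff, ← Matrix.mulVecLin_mul, d₂_mul_d₃, Matrix.mulVecLin_zero]

theorem mem_ker_d₂_iff (v : Fin 4 → R) :
    v ∈ LinearMap.ker (d₂ x y).mulVecLin ↔
      y * v 0 + x * v 1 + x * v 3 = 0 ∧ y * v 1 + x * v 2 - y * v 3 = 0 := by
  simp [d₂, funext_iff, Fin.forall_fin_two, dotProduct, Fin.sum_univ_four,
    sub_eq_add_neg]

theorem d₃_mulVec (a c : R) :
    (d₃ x y).mulVec ![a, c] = ![2 * x * a, -y * a + x * c, -2 * y * c, -y * a - x * c] := by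
  ext i
  fin_cases i <;> simp [d₃, Matrix.mulVec, dotProduct, sub_eq_add_neg]

variable {x y}

theorem ker_d₂_le_range_d₃ (hx : IsLeftRegular x) (hxy : ∀ z, x ∣ y * z → x ∣ z)
    (h2 : IsUnit (2 : R)) :
    LinearMap.ker (d₂ x y).mulVecLin ≤ LinearMap.range (d₃ x y).mulVecLin := by
  intro v hv
  obtain ⟨h₀, h₁⟩ := (mem_ker_d₂_iff x y v).mp hv
  obtain ⟨a, ha⟩ : x ∣ v 0 := hxy _ ⟨-(v 1 + v 3), by linear_combination h₀⟩
  obtain ⟨c, hc⟩ : x ∣ v 1 - v 3 := hxy _ ⟨-v 2, by linear_combination h₁⟩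
  have hsum : v 1 + v 3 = -(y * a) := hx (by linear_combination h₀ - y * ha)
  have hv₂ : v 2 = -(y * c) := hx (by linear_combination h₁ - y * hc)
  obtain ⟨h, hh⟩ := h2.exists_left_inv
  refine ⟨![h * a, h * c], ?_⟩
  rw [Matrix.mulVecLin_apply, d₃_mulVec]
  ext i
  fin_cases i <;> simp only [Fin.zero_eta, Fin.mk_one, Fin.reduceFinMk, Matrix.cons_val]
  · linear_combination x * a * hh - ha
  · linear_combination -h * hsum - h * hc + v 1 * hh
  · linear_combination -hv₂ - y * c * hh
  · linear_combination -h * hsum + h * hc + v 3 * hh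

theorem ker_d₂_eq_range_d₃ (hx : IsLeftRegular x) (hxy : ∀ z, x ∣ y * z → x ∣ z)
    (h2 : IsUnit (2 : R)) :
    LinearMap.ker (d₂ x y).mulVecLin = LinearMap.range (d₃ x y).mulVecLin :=
  le_antisymm (ker_d₂_le_range_d₃ hx hxy h2) (range_d₃_le_ker_d₂ x y)

end ExteriorSquareKoszul

theorem exterior_square_koszul_exact_middle :
    letI x : R4 := X 0
    letI y : R4 := X 1
    letI D2 : Matrix (Fin 2) (Fin 4) R4 := !![y, x, 0, x; 0, y, x, -y]
    letI D3 : Matrix (Fin 4) (Fin 2) R4 := !![2 * x, 0; -y, x; 0, -2 * y; -y, -x]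
    LinearMap.ker D2.mulVecLin = LinearMap.range D3.mulVecLin := by
  have hx : IsLeftRegular (X 0 : R4) := (IsRegular.of_ne_zero (X_ne_zero 0)).left
  have hxy (z : R4) (h : X 0 ∣ X 1 * z) : X 0 ∣ z :=
    (X_prime.dvd_mul.mp h).resolve_left (by simp)
  have h2 : IsUnit (2 : R4) := by
    rw [← map_ofNat C 2]
    exact (IsUnit.mk0 (2 : ℚ) two_ne_zero).map C
  exact ExteriorSquareKoszul.ker_d₂_eq_range_d₃ hx hxy h2
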